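/- arXiv:2603.01448 — 2 statements merged into one kernel-verified Lean document; each statement's English description precedes it below -/
import Mathlib

section
/- For vectors x, y ∈ ℝ^m, the function d'(x,y) = (√m/√l)·d(x̂,ŷ), where x̂ is the PAA of x into l segments (l divides m), satisfies d'(x,y) ≤ d(x,y) (lower-bounding property of scaled PAA distance under Euclidean distance). -/
/-- Lower-bounding property of the scaled PAA distance: for series of length
`m = l·w` (indexed by segment and offset), the PAA distance scaled by
`√m/√l = √w` lower bounds the Euclidean distance. -/
theorem paa_lower_bound (l w : ℕ) (hl : 0 < l) (hw : 0 < w)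
    (x y : Fin l → Fin w → ℝ) :
    (Real.sqrt (l * w) / Real.sqrt l) *
      Real.sqrt (∑ j, ((∑ i, x j i) / w - (∑ i, y j i) / w) ^ 2) ≤
    Real.sqrt (∑ j, ∑ i, (x j i - y j i) ^ 2) := by
  have hl' : (0:ℝ) < l := by exact_mod_cast hl
  have hw' : (0:ℝ) < w := by exact_mod_cast hw
  have h1 : Real.sqrt (l * w) / Real.sqrt l = Real.sqrt w := by
    rw [Real.sqrt_mul hl'.le]
    field_simp
  rw [h1, ← Real.sqrt_mul hw'.le]
  apply Real.sqrt_le_sqrt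
  rw [Finset.mul_sum]
  apply Finset.sum_le_sum
  intro j _
  have key : (∑ i, (x j i - y j i)) ^ 2 ≤ (w:ℝ) * ∑ i, (x j i - y j i) ^ 2 := by
    have := sq_sum_le_card_mul_sum_sq (s := Finset.univ) (f := fun i => x j i - y j i)
    simpa using this
  have heq : ((∑ i, x j i) / w - (∑ i, y j i) / w) = (∑ i, (x j i - y j i)) / w := by
    rw [Finset.sum_sub_distrib]; ring
  rw [heq, div_pow]
  have h2 : (w:ℝ) * ((∑ i, (x j i - y j i)) ^ 2 / (w:ℝ) ^ 2)
      = (∑ i, (x j i - y j i)) ^ 2 / w := by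
    field_simp
  rw [h2, div_le_iff₀ hw']
  nlinarith [key, Finset.sum_nonneg (fun i (_ : i ∈ Finset.univ) => sq_nonneg (x j i - y j i))]
end

section
/- The variance of the chi distribution with m degrees of freedom, Var(χ_m) = m − 2(Γ((m+1)/2)/Γ(m/2))², is bounded above by 1 for all m ≥ 1, and tends to 1/2 as m → ∞. -/
open Filter

noncomputable def rr (n : ℕ) : ℝ := Real.Gamma (((n : ℝ) + 1) / 2) / Real.Gamma ((n : ℝ) / 2)
noncomputable def qq (n : ℕ) : ℝ := (n : ℝ) - 2 * rr n ^ 2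

lemma conv_ineq {a : ℝ} (ha : 0 < a) : Real.Gamma (a + 1/2) ^ 2 ≤ a * Real.Gamma a ^ 2 := by
  have ha1 : (0:ℝ) < a + 1 := by linarith
  have h := Real.convexOn_log_Gamma.2 (Set.mem_Ioi.2 ha) (Set.mem_Ioi.2 ha1)
    (by norm_num : (0:ℝ) ≤ 1/2) (by norm_num : (0:ℝ) ≤ 1/2) (by norm_num)
  simp only [Function.comp_apply, smul_eq_mul] at h
  have hmid : (1/2 : ℝ) * a + 1/2 * (a + 1) = a + 1/2 := by ring
  rw [hmid] at h
  have hGa : 0 < Real.Gamma a := Real.Gamma_pos_of_pos ha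
  have hGa1 : 0 < Real.Gamma (a + 1) := Real.Gamma_pos_of_pos ha1
  have hGm : 0 < Real.Gamma (a + 1/2) := Real.Gamma_pos_of_pos (by linarith)
  have h2 : Real.log (Real.Gamma (a + 1/2) ^ 2) ≤ Real.log (Real.Gamma a * Real.Gamma (a + 1)) := by
    rw [Real.log_pow, Real.log_mul hGa.ne' hGa1.ne']
    push_cast
    linarith
  have h3 : Real.Gamma (a + 1/2) ^ 2 ≤ Real.Gamma a * Real.Gamma (a + 1) :=
    (Real.log_le_log_iff (by positivity) (by positivity)).1 h2
  rwa [Real.Gamma_add_one ha.ne', show Real.Gamma a * (a * Real.Gamma a) = a * Real.Gamma a ^ 2 by ring] at h3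

lemma rr_pos (n : ℕ) (hn : 1 ≤ n) : 0 < rr n := by
  have hn0 : (0:ℝ) < n := by exact_mod_cast hn
  unfold rr
  exact div_pos (Real.Gamma_pos_of_pos (by positivity)) (Real.Gamma_pos_of_pos (by positivity))

lemma qq_le_one (n : ℕ) (hn : 1 ≤ n) : qq n ≤ 1 := by
  rcases Nat.lt_or_ge n 2 with h2 | h2
  · interval_cases n
    · have : 0 ≤ rr 1 ^ 2 := sq_nonneg _
      unfold qq; push_cast; linarith
  · have hn0 : (0:ℝ) < (n:ℝ) - 1 := by
      have : (2:ℝ) ≤ n := by exact_mod_cast h2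
      linarith
    set a : ℝ := ((n:ℝ) - 1) / 2 with hadef
    have ha : 0 < a := by positivity
    have key := conv_ineq ha
    have e1 : a + 1/2 = (n:ℝ)/2 := by rw [hadef]; ring
    have e2 : a + 1 = ((n:ℝ) + 1)/2 := by rw [hadef]; ring
    have hGa : 0 < Real.Gamma a := Real.Gamma_pos_of_pos ha
    have hGn : 0 < Real.Gamma ((n:ℝ)/2) := Real.Gamma_pos_of_pos (by positivity)
    have hGam : Real.Gamma (((n:ℝ)+1)/2) = a * Real.Gamma a := by
      rw [← e2, Real.Gamma_add_one ha.ne']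
    rw [e1] at key
    -- key : Γ(n/2)^2 ≤ a * Γ(a)^2
    have hr : rr n = a * Real.Gamma a / Real.Gamma ((n:ℝ)/2) := by rw [rr, hGam]
    have goal2 : (n:ℝ) - 1 ≤ 2 * rr n ^ 2 := by
      rw [hr, div_pow, ← mul_div_assoc, le_div_iff₀ (by positivity)]
      have : (n:ℝ) - 1 = 2 * a := by rw [hadef]; ring
      rw [this]
      nlinarith [key, ha, sq_nonneg (Real.Gamma a), hGn]
    unfold qq; linarith

lemma rr_rec (n : ℕ) (hn : 1 ≤ n) : rr (n + 2) = (((n:ℝ) + 1) / n) * rr n := by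
  have hn0 : (0:ℝ) < n := by exact_mod_cast hn
  have h1 : (0:ℝ) < ((n:ℝ) + 1) / 2 := by positivity
  have h2 : (0:ℝ) < (n:ℝ) / 2 := by positivity
  have hG1 : Real.Gamma (((n:ℝ) + 1) / 2) ≠ 0 := (Real.Gamma_pos_of_pos h1).ne'
  have hG2 : Real.Gamma ((n:ℝ) / 2) ≠ 0 := (Real.Gamma_pos_of_pos h2).ne'
  unfold rr
  push_cast
  rw [show ((n:ℝ) + 2 + 1) / 2 = ((n:ℝ) + 1) / 2 + 1 by ring,
      show ((n:ℝ) + 2) / 2 = (n:ℝ) / 2 + 1 by ring,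
      Real.Gamma_add_one h1.ne', Real.Gamma_add_one h2.ne']
  field_simp

lemma qq_rec (n : ℕ) (hn : 1 ≤ n) :
    (n:ℝ)^2 * (qq (n + 2) - 1/2) = ((n:ℝ) + 1)^2 * (qq n - 1/2) + 1/2 := by
  have hn0 : (0:ℝ) < n := by exact_mod_cast hn
  have h := rr_rec n hn
  unfold qq
  rw [h]
  push_cast
  field_simp
  ring

lemma rr_prod (n : ℕ) (hn : 1 ≤ n) : rr n * rr (n + 1) = (n:ℝ) / 2 := by
  have hn0 : (0:ℝ) < n := by exact_mod_cast hn
  have h1 : (0:ℝ) < ((n:ℝ) + 1) / 2 := by positivity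
  have h2 : (0:ℝ) < (n:ℝ) / 2 := by positivity
  have hG1 : Real.Gamma (((n:ℝ) + 1) / 2) ≠ 0 := (Real.Gamma_pos_of_pos h1).ne'
  have hG2 : Real.Gamma ((n:ℝ) / 2) ≠ 0 := (Real.Gamma_pos_of_pos h2).ne'
  unfold rr
  push_cast
  rw [show ((n:ℝ) + 1 + 1) / 2 = (n:ℝ) / 2 + 1 by ring, Real.Gamma_add_one h2.ne']
  field_simp

lemma qq_bound (j : ℕ) : ∀ n : ℕ, 1 ≤ n → qq n - 1/2 ≤ (n:ℝ) / (2 * ((n:ℝ) + 2 * j)) := by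
  induction j with
  | zero =>
    intro n hn
    have hn0 : (0:ℝ) < n := by exact_mod_cast hn
    have h := qq_le_one n hn
    push_cast
    have e : (n:ℝ) / (2 * ((n:ℝ) + 2 * 0)) = 1/2 := by
      rw [show 2 * ((n:ℝ) + 2 * 0) = 2 * n by ring]
      rw [div_eq_div_iff (by positivity) (by norm_num : (2:ℝ) ≠ 0)]
      ring
    rw [e]
    linarith
  | succ j ih =>
    intro n hn
    have hn0 : (0:ℝ) < n := by exact_mod_cast hn
    have hrec := qq_rec n hn
    have hih := ih (n + 2) (by omega)
    set D : ℝ := 2 * ((n:ℝ) + 2 * (j + 1)) with hD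
    have hDpos : 0 < D := by rw [hD]; positivity
    have hden : 2 * (((n:ℝ) + 2) + 2 * j) = D := by rw [hD]; push_cast; ring
    have hih' : qq (n + 2) - 1/2 ≤ ((n:ℝ) + 2) / D := by
      have := hih
      push_cast at this ⊢
      rw [show 2 * (((n:ℝ) + 2) + 2 * (j:ℝ)) = D by rw [hD]; push_cast; ring] at this
      exact this
    -- (n+1)^2 * (qq n - 1/2) = n^2 * (qq (n+2) - 1/2) - 1/2 ≤ n^2 * ((n+2)/D)
    have h1 : ((n:ℝ) + 1)^2 * (qq n - 1/2) ≤ (n:ℝ)^2 * (((n:ℝ) + 2) / D) := by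
      have h2 : (n:ℝ)^2 * (qq (n + 2) - 1/2) ≤ (n:ℝ)^2 * (((n:ℝ) + 2) / D) :=
        mul_le_mul_of_nonneg_left hih' (by positivity)
      linarith
    have h3 : (n:ℝ)^2 * (((n:ℝ) + 2) / D) ≤ ((n:ℝ) + 1)^2 * ((n:ℝ) / D) := by
      rw [mul_div_assoc', mul_div_assoc']
      exact (div_le_div_iff_of_pos_right hDpos).2 (by nlinarith [hn0])
    have h4 : ((n:ℝ) + 1)^2 * (qq n - 1/2) ≤ ((n:ℝ) + 1)^2 * ((n:ℝ) / D) := le_trans h1 h3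
    have := (mul_le_mul_iff_right₀ (by positivity : (0:ℝ) < ((n:ℝ) + 1)^2)).1 h4
    push_cast
    rw [show 2 * ((n:ℝ) + 2 * ((j:ℝ) + 1)) = D by rw [hD]; try push_cast; try ring]
    exact this

lemma qq_le_half (n : ℕ) (hn : 1 ≤ n) : qq n ≤ 1/2 := by
  have hn0 : (0:ℝ) < n := by exact_mod_cast hn
  have hlim : Tendsto (fun j : ℕ => (n:ℝ) / (2 * ((n:ℝ) + 2 * j))) atTop (nhds 0) := by
    apply Tendsto.div_atTop (tendsto_const_nhds : Tendsto (fun _ : ℕ => (n:ℝ)) atTop (nhds n))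
    have : Tendsto (fun j : ℕ => 4 * (j:ℝ) + 2 * n) atTop atTop :=
      tendsto_atTop_add_const_right _ _
        (tendsto_natCast_atTop_atTop.const_mul_atTop (by norm_num : (0:ℝ) < 4))
    exact this.congr (fun j => by ring)
  have hle : qq n - 1/2 ≤ 0 := ge_of_tendsto' hlim (fun j => qq_bound j n hn)
  linarith

lemma qq_lower (n : ℕ) (hn : 1 ≤ n) : (n:ℝ) / (2 * n + 1) ≤ qq n := by
  have hn0 : (0:ℝ) < n := by exact_mod_cast hn
  have hr1 : 0 < rr (n + 1) := rr_pos (n + 1) (by omega)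
  have hprod := rr_prod n hn
  have hq1 : qq (n + 1) ≤ 1/2 := qq_le_half (n + 1) (by omega)
  have hs : (2 * (n:ℝ) + 1) / 4 ≤ rr (n + 1) ^ 2 := by
    have : qq (n + 1) = ((n:ℝ) + 1) - 2 * rr (n + 1) ^ 2 := by unfold qq; push_cast; ring
    nlinarith
  have hrn : rr n = ((n:ℝ) / 2) / rr (n + 1) := by
    field_simp
    linarith [hprod]
  have hqn : qq n = (n:ℝ) - (n:ℝ)^2 / (2 * rr (n + 1) ^ 2) := by
    unfold qq
    rw [hrn, div_pow]
    field_simp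
  rw [hqn]
  have hb : (n:ℝ)^2 / (2 * rr (n + 1) ^ 2) ≤ (n:ℝ)^2 / ((2 * (n:ℝ) + 1) / 2) := by
    apply div_le_div_of_nonneg_left (by positivity) (by positivity)
    linarith
  have heq : (n:ℝ) - (n:ℝ)^2 / ((2 * (n:ℝ) + 1) / 2) = (n:ℝ) / (2 * (n:ℝ) + 1) := by
    field_simp
    ring
  linarith

lemma tendsto_lower : Tendsto (fun n : ℕ => (n:ℝ) / (2 * n + 1)) atTop (nhds (1/2)) := by
  have h0 : Tendsto (fun n : ℕ => (1/2 : ℝ) / (2 * (n:ℝ) + 1)) atTop (nhds 0) := by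
    apply Tendsto.div_atTop (tendsto_const_nhds : Tendsto (fun _ : ℕ => (1/2:ℝ)) atTop (nhds (1/2)))
    exact tendsto_atTop_add_const_right _ _
      (tendsto_natCast_atTop_atTop.const_mul_atTop (by norm_num : (0:ℝ) < 2))
  have h1 : Tendsto (fun n : ℕ => 1/2 - (1/2 : ℝ) / (2 * (n:ℝ) + 1)) atTop (nhds (1/2)) := by
    simpa using (tendsto_const_nhds (x := (1/2:ℝ)) (f := atTop)).sub h0
  apply h1.congr
  intro n
  have hpos : (0:ℝ) < 2 * (n:ℝ) + 1 := by positivity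
  field_simp
  ring

/-- The variance `m − 2·(Γ((m+1)/2)/Γ(m/2))²` of the chi distribution with `m`
degrees of freedom is at most `1` for all `m ≥ 1`, and tends to `1/2`. -/
theorem chi_variance_bounds :
    (∀ m : ℕ, 1 ≤ m →
      (m : ℝ) - 2 * (Real.Gamma ((m + 1) / 2) / Real.Gamma (m / 2)) ^ 2 ≤ 1) ∧
    Tendsto (fun m : ℕ =>
        (m : ℝ) - 2 * (Real.Gamma ((m + 1) / 2) / Real.Gamma (m / 2)) ^ 2)
      atTop (nhds (1 / 2)) := by
  have hqq : ∀ m : ℕ,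
      (m : ℝ) - 2 * (Real.Gamma ((m + 1) / 2) / Real.Gamma (m / 2)) ^ 2 = qq m := by
    intro m; rfl
  constructor
  · intro m hm
    rw [hqq m]
    linarith [qq_le_half m hm]
  · apply tendsto_of_tendsto_of_tendsto_of_le_of_le' tendsto_lower
      (tendsto_const_nhds : Tendsto (fun _ : ℕ => (1/2 : ℝ)) atTop (nhds (1/2)))
    · filter_upwards [eventually_ge_atTop 1] with m hm
      rw [hqq m]; exact qq_lower m hm
    · filter_upwards [eventually_ge_atTop 1] with m hm
      rw [hqq m]; exact qq_le_half m hm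
end
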